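/- Let n = 2m with m ≥ 1 an integer, and let λ be a real number such that λ − m + k ≠ 0 for every integer k with 1 ≤ k ≤ m. Then ∑_{j=0}^{m} (2m + 2j) · (−1)^j · C(2m, m−j) · (m)_j (λ)_j / ((λ − m + 1)_j · j!) = 0. (This is Theorem 2.3, the vanishing V_n(λ) = 0 of the critical polynomial, verified on the round sphere S^n of even dimension n = 2m, where T*_{2j}(λ)(v_{n−2j}) equals (−1)^m 2^{−2m} times the j-th summand.) -/

import Mathlib

/-!
Each summand equals `2m·C(2m,m)` times the Chu–Vandermonde term
`(-m)_j (λ)_j / ((λ-m+1)_j j!)`. The partial sums of that series telescope: up to `k` they equal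
`(1-m)_k (λ+1)_k / ((λ-m+1)_k k!)`, and at `k = m` the factor `m·(1-m)_m = -(-m)_{m+1}` vanishes.
-/

/-- Pochhammer symbol `(x)_k = x (x+1) ⋯ (x+k-1)`, with `(x)_0 = 1`. -/
noncomputable def poch (x : ℝ) : ℕ → ℝ
  | 0 => 1
  | k + 1 => poch x k * (x + k)

lemma poch_succ (x : ℝ) (k : ℕ) : poch x (k + 1) = poch x k * (x + k) := rfl

lemma poch_succ_left (x : ℝ) (k : ℕ) : poch x (k + 1) = x * poch (x + 1) k := by
  induction k with
  | zero => simp [poch]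
  | succ k ih => rw [poch_succ, ih, poch_succ]; push_cast; ring

lemma poch_ne_zero {x : ℝ} {k : ℕ} (h : ∀ i < k, x + i ≠ 0) : poch x k ≠ 0 := by
  induction k with
  | zero => simp [poch]
  | succ k ih =>
    rw [poch_succ]
    exact mul_ne_zero (ih fun i hi => h i (by omega)) (h k (by omega))

lemma poch_ne_zero_of_succ {x : ℝ} {k : ℕ} (h : poch x (k + 1) ≠ 0) : poch x k ≠ 0 :=
  left_ne_zero_of_mul (by rwa [← poch_succ])

lemma poch_neg_natCast_succ (n : ℕ) : poch (-(n : ℝ)) (n + 1) = 0 := by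
  rw [poch_succ, neg_add_cancel, mul_zero]

lemma sum_range_succ_poch_mul_poch_div (x a : ℝ) (k : ℕ) (hc : poch (x + a + 1) k ≠ 0) :
    ∑ j ∈ Finset.range (k + 1), poch x j * poch a j / (poch (x + a + 1) j * j.factorial)
      = poch (x + 1) k * poch (a + 1) k / (poch (x + a + 1) k * k.factorial) := by
  induction k with
  | zero => simp [poch]
  | succ k ih =>
    have hck : poch (x + a + 1) k ≠ 0 := poch_ne_zero_of_succ hc
    have hlast : x + a + 1 + k ≠ 0 := right_ne_zero_of_mul (by rwa [← poch_succ])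
    have hfac : (k.factorial : ℝ) ≠ 0 := by positivity
    rw [Finset.sum_range_succ, ih hck, poch_succ_left x, poch_succ_left a]
    simp only [poch_succ, Nat.factorial_succ]
    push_cast
    field_simp
    ring

lemma two_mul_add_mul_neg_one_pow_choose_mul_poch (m j : ℕ) (hj : j ≤ m) :
    (2 * m + 2 * j : ℝ) * (-1) ^ j * ((2 * m).choose (m - j) : ℝ) * poch (m : ℝ) j
      = 2 * m * ((2 * m).choose m : ℝ) * poch (-(m : ℝ)) j := by
  induction j with
  | zero => simp [poch]
  | succ j ih =>
    have hj' : j < m := by omega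
    have hchoose : ((2 * m).choose (m - j) : ℝ) * ((m : ℝ) - j)
        = ((2 * m).choose (m - (j + 1)) : ℝ) * ((m : ℝ) + j + 1) := by
      have h := Nat.choose_succ_right_eq (2 * m) (m - (j + 1))
      rw [show m - (j + 1) + 1 = m - j by omega, show 2 * m - (m - (j + 1)) = m + j + 1 by omega]
        at h
      rw [← Nat.cast_sub hj'.le]
      exact_mod_cast h
    simp only [poch_succ]
    push_cast
    linear_combination
      ((j : ℝ) - m) * ih hj'.le + 2 * ((m : ℝ) + j) * (-1) ^ j * poch (m : ℝ) j * hchoose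

theorem statement5_general (m : ℕ) (lam : ℝ)
    (hlam : ∀ k : ℕ, 1 ≤ k → k ≤ m → lam - (m : ℝ) + k ≠ 0) :
    ∑ j ∈ Finset.range (m + 1),
        (2 * m + 2 * j : ℝ) * (-1) ^ j * ((2 * m).choose (m - j) : ℝ) *
          poch (m : ℝ) j * poch lam j /
            (poch (lam - (m : ℝ) + 1) j * (j.factorial : ℝ)) = 0 := by
  have hshift : -(m : ℝ) + lam + 1 = lam - m + 1 := by ring
  have hc : poch (-(m : ℝ) + lam + 1) m ≠ 0 := by
    refine poch_ne_zero fun i hi h => hlam (i + 1) (by omega) (by omega) ?_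
    push_cast
    linarith
  calc _ = 2 * m * ((2 * m).choose m : ℝ) * ∑ j ∈ Finset.range (m + 1),
          poch (-(m : ℝ)) j * poch lam j / (poch (-(m : ℝ) + lam + 1) j * j.factorial) := by
        rw [Finset.mul_sum, hshift]
        refine Finset.sum_congr rfl fun j hj => ?_
        have hj' : j ≤ m := Nat.lt_succ_iff.mp (Finset.mem_range.mp hj)
        linear_combination poch lam j / (poch (lam - m + 1) j * j.factorial)
          * two_mul_add_mul_neg_one_pow_choose_mul_poch m j hj'
    _ = -2 * ((2 * m).choose m : ℝ) * poch (-(m : ℝ)) (m + 1) * poch (lam + 1) m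
          / (poch (-(m : ℝ) + lam + 1) m * m.factorial) := by
        rw [sum_range_succ_poch_mul_poch_div _ _ _ hc, poch_succ_left]
        ring
    _ = 0 := by rw [poch_neg_natCast_succ]; simp

theorem statement5 (m : ℕ) (hm : 1 ≤ m) (lam : ℝ)
    (hlam : ∀ k : ℕ, 1 ≤ k → k ≤ m → lam - (m : ℝ) + k ≠ 0) :
    ∑ j ∈ Finset.range (m + 1),
        (2 * m + 2 * j : ℝ) * (-1) ^ j * ((2 * m).choose (m - j) : ℝ) *
          poch (m : ℝ) j * poch lam j /
            (poch (lam - (m : ℝ) + 1) j * (j.factorial : ℝ)) = 0 :=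
  statement5_general m lam hlam
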